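/- For all μ_1, μ_2, ν_1, ν_2 ∈ M, the generalized Wasserstein distance is subadditive: W^{a,b}_p(μ_1 + μ_2, ν_1 + ν_2) ≤ W^{a,b}_p(μ_1, ν_1) + W^{a,b}_p(μ_2, ν_2). -/

import Mathlib

open MeasureTheory ENNReal Filter Topology

noncomputable section

/-- `ℝ^d` as a Euclidean space. -/
abbrev Euc (d : ℕ) := EuclideanSpace ℝ (Fin d)

variable {E : Type*} [NormedAddCommGroup E] [MeasurableSpace E]

/-- Total mass `|μ| = μ(ℝ^d)` of a nonnegative measure, as a real number. -/
def mass (μ : Measure E) : ℝ := (μ Set.univ).toReal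

/-- Total variation norm `|μ - ν|` of the difference of two nonnegative finite
measures, computed via the Jordan decomposition `(μ - ν) + (ν - μ)`. -/
def tvDist (μ ν : Measure E) : ℝ := ((μ - ν) Set.univ + (ν - μ) Set.univ).toReal

/-- `μ` has finite `p`-th moment. -/
def FinMom (p : ℝ) (μ : Measure E) : Prop :=
  ∫⁻ x, ENNReal.ofReal (‖x‖ ^ p) ∂μ < ⊤

/-- `π` is a transference plan from `μ` to `ν`: its first and second marginals
are `μ` and `ν` respectively. -/
def IsPlan (π : Measure (E × E)) (μ ν : Measure E) : Prop :=
  π.map Prod.fst = μ ∧ π.map Prod.snd = ν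

/-- Transportation cost `∫ |x - y|^p dπ(x,y)` of a plan `π`. -/
def Wcost (p : ℝ) (π : Measure (E × E)) : ℝ≥0∞ :=
  ∫⁻ z, ENNReal.ofReal (dist z.1 z.2 ^ p) ∂π

/-- The Wasserstein distance `W_p(μ,ν) = (inf_π ∫ |x-y|^p dπ)^{1/p}`. -/
def Wp (p : ℝ) (μ ν : Measure E) : ℝ :=
  ((sInf (Wcost p '' {π | IsPlan π μ ν})) ^ (1 / p)).toReal

/-- The set of admissible values `a|μ-μ̃| + a|ν-ν̃| + b W_p(μ̃,ν̃)` over all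
`μ̃, ν̃ ∈ M^p` with `|μ̃| = |ν̃|`. -/
def gwSet (a b p : ℝ) (μ ν : Measure E) : Set ℝ :=
  { r | ∃ μ' ν' : Measure E, IsFiniteMeasure μ' ∧ IsFiniteMeasure ν' ∧
      FinMom p μ' ∧ FinMom p ν' ∧ μ' Set.univ = ν' Set.univ ∧
      r = a * tvDist μ μ' + a * tvDist ν ν' + b * Wp p μ' ν' }

/-- The generalized Wasserstein distance `W^{a,b}_p`. -/
def GW (a b p : ℝ) (μ ν : Measure E) : ℝ := sInf (gwSet a b p μ ν)

/-- The support of a measure: the set of points all of whose open neighbourhoods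
have positive measure. -/
def msupp (μ : Measure E) : Set E := {x : E | ∀ U : Set E, IsOpen U → x ∈ U → μ U ≠ 0}

/-- Weak convergence of a sequence of measures: convergence of integrals of all
bounded continuous functions. -/
def WeakConv {F : Type*} [MeasurableSpace F] [TopologicalSpace F]
    (μs : ℕ → Measure F) (μ : Measure F) : Prop :=
  ∀ f : F → ℝ, Continuous f → (∃ C : ℝ, ∀ x, |f x| ≤ C) →
    Tendsto (fun n => ∫ x, f x ∂(μs n)) atTop (𝓝 (∫ x, f x ∂μ))

/-- A family of measures is tight if for every `ε > 0` there is a compact set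
whose complement has measure less than `ε` for all members of the family. -/
def Tight (F : Set (Measure E)) : Prop :=
  ∀ ε : ℝ, 0 < ε → ∃ K : Set E, IsCompact K ∧ ∀ μ ∈ F, μ Kᶜ < ENNReal.ofReal ε

end

/-!
Admissible pairs `(μ̃ᵢ, ν̃ᵢ)` for `(μᵢ, νᵢ)` add up to an admissible pair for the sums, and
every term of the cost is subadditive: the total variation part because
`(μ₁ + μ₂) - (ν₁ + ν₂) ≤ (μ₁ - ν₁) + (μ₂ - ν₂)`, and `W_p` because the sum of two transport
plans is a plan between the sums and `t ↦ t ^ (1 / p)` is subadditive.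
-/

open Set

namespace MeasureTheory.Measure

variable {α : Type*} [MeasurableSpace α]

/-- On a Hahn set `s` for `(μ, ν)`, `μ = (μ - ν) + ν`; off it, `μ ≤ ν`. -/
lemma le_sub_add (μ ν : Measure α) [IsFiniteMeasure μ] [IsFiniteMeasure ν] :
    μ ≤ μ - ν + ν := by
  obtain ⟨s, hs, hνμ, hμν⟩ := hahn_decomposition μ ν
  have hs_le : ν.restrict s ≤ μ.restrict s := le_iff.2 fun t ht => by
    simpa only [restrict_apply ht] using hνμ _ (ht.inter hs) inter_subset_right
  have hsc_le : μ.restrict sᶜ ≤ ν.restrict sᶜ := le_iff.2 fun t ht => by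
    simpa only [restrict_apply ht] using hμν _ (ht.inter hs.compl) inter_subset_right
  calc μ = μ.restrict s + μ.restrict sᶜ := (restrict_add_restrict_compl hs).symm
    _ = (μ - ν).restrict s + ν.restrict s + μ.restrict sᶜ := by
      rw [restrict_sub_eq_restrict_sub_restrict hs, sub_add_cancel_of_le hs_le]
    _ ≤ (μ - ν).restrict s + ν.restrict s + ((μ - ν).restrict sᶜ + ν.restrict sᶜ) := by
      gcongr
      exact Measure.le_add_left hsc_le
    _ = μ - ν + ν := by
      rw [add_add_add_comm, restrict_add_restrict_compl hs, restrict_add_restrict_compl hs]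

lemma add_sub_add_le (μ₁ μ₂ ν₁ ν₂ : Measure α) [IsFiniteMeasure μ₁] [IsFiniteMeasure μ₂]
    [IsFiniteMeasure ν₁] [IsFiniteMeasure ν₂] :
    μ₁ + μ₂ - (ν₁ + ν₂) ≤ μ₁ - ν₁ + (μ₂ - ν₂) := by
  refine sub_le_of_le_add ?_
  calc μ₁ + μ₂ ≤ μ₁ - ν₁ + ν₁ + (μ₂ - ν₂ + ν₂) :=
        add_le_add (le_sub_add μ₁ ν₁) (le_sub_add μ₂ ν₂)
    _ = μ₁ - ν₁ + (μ₂ - ν₂) + (ν₁ + ν₂) := add_add_add_comm _ _ _ _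

end MeasureTheory.Measure

section Plans

variable {α : Type*} [MeasurableSpace α]

lemma tvDist_add_add_le (μ₁ μ₂ ν₁ ν₂ : Measure α) [IsFiniteMeasure μ₁] [IsFiniteMeasure μ₂]
    [IsFiniteMeasure ν₁] [IsFiniteMeasure ν₂] :
    tvDist (μ₁ + μ₂) (ν₁ + ν₂) ≤ tvDist μ₁ ν₁ + tvDist μ₂ ν₂ := by
  have hμν := Measure.le_iff'.1 (Measure.add_sub_add_le μ₁ μ₂ ν₁ ν₂) univ
  have hνμ := Measure.le_iff'.1 (Measure.add_sub_add_le ν₁ ν₂ μ₁ μ₂) univ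
  simp only [Measure.add_apply] at hμν hνμ
  unfold tvDist
  rw [← ENNReal.toReal_add (by simp) (by simp)]
  refine ENNReal.toReal_mono (by simp) ?_
  calc _ ≤ (μ₁ - ν₁) univ + (μ₂ - ν₂) univ + ((ν₁ - μ₁) univ + (ν₂ - μ₂) univ) :=
        add_le_add hμν hνμ
    _ = _ := add_add_add_comm _ _ _ _

lemma IsPlan.add {μ₁ ν₁ μ₂ ν₂ : Measure α} {π₁ π₂ : Measure (α × α)}
    (h₁ : IsPlan π₁ μ₁ ν₁) (h₂ : IsPlan π₂ μ₂ ν₂) :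
    IsPlan (π₁ + π₂) (μ₁ + μ₂) (ν₁ + ν₂) :=
  ⟨by rw [Measure.map_add _ _ measurable_fst, h₁.1, h₂.1],
    by rw [Measure.map_add _ _ measurable_snd, h₁.2, h₂.2]⟩

/-- The normalized product coupling. -/
lemma exists_isPlan {μ ν : Measure α} [IsFiniteMeasure μ] (h : μ univ = ν univ) :
    ∃ π : Measure (α × α), IsPlan π μ ν := by
  have : IsFiniteMeasure ν := ⟨h ▸ measure_lt_top μ univ⟩
  by_cases hμ : μ univ = 0
  · refine ⟨0, ?_, ?_⟩ <;> simp [Measure.measure_univ_eq_zero.1, hμ, h ▸ hμ]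
  · have hμν : (μ univ)⁻¹ * μ univ = 1 := ENNReal.inv_mul_cancel hμ (measure_ne_top μ univ)
    refine ⟨(μ univ)⁻¹ • μ.prod ν, ?_, ?_⟩
    · rw [Measure.map_smul, Measure.map_fst_prod, ← h, smul_smul, hμν, one_smul]
    · rw [Measure.map_smul, Measure.map_snd_prod, smul_smul, hμν, one_smul]

end Plans

lemma ofReal_dist_rpow_le {E : Type*} [SeminormedAddCommGroup E] {p : ℝ} (hp : 1 ≤ p)
    (x y : E) :
    ENNReal.ofReal (dist x y ^ p) ≤
      2 ^ (p - 1) * (ENNReal.ofReal (‖x‖ ^ p) + ENNReal.ofReal (‖y‖ ^ p)) := by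
  have hp0 : 0 ≤ p := zero_le_one.trans hp
  simp only [← ENNReal.ofReal_rpow_of_nonneg dist_nonneg hp0,
    ← ENNReal.ofReal_rpow_of_nonneg (norm_nonneg _) hp0]
  calc ENNReal.ofReal (dist x y) ^ p ≤ (ENNReal.ofReal ‖x‖ + ENNReal.ofReal ‖y‖) ^ p := by
        gcongr
        exact (ENNReal.ofReal_le_ofReal (dist_le_norm_add_norm x y)).trans ENNReal.ofReal_add_le
    _ ≤ _ := ENNReal.rpow_add_le_mul_rpow_add_rpow _ _ hp

section Wasserstein

variable {E : Type*} [NormedAddCommGroup E] [MeasurableSpace E] {p : ℝ}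

lemma Wcost_add (π₁ π₂ : Measure (E × E)) : Wcost p (π₁ + π₂) = Wcost p π₁ + Wcost p π₂ :=
  lintegral_add_measure _ _ _

lemma Wcost_le_of_isPlan [OpensMeasurableSpace E] (hp : 1 ≤ p) {μ ν : Measure E}
    {π : Measure (E × E)} (h : IsPlan π μ ν) :
    Wcost p π ≤ 2 ^ (p - 1) *
      (∫⁻ x, ENNReal.ofReal (‖x‖ ^ p) ∂μ + ∫⁻ x, ENNReal.ofReal (‖x‖ ^ p) ∂ν) := by
  have hmom : Measurable fun x : E => ENNReal.ofReal (‖x‖ ^ p) := by fun_prop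
  calc Wcost p π ≤ ∫⁻ z, 2 ^ (p - 1) *
        (ENNReal.ofReal (‖z.1‖ ^ p) + ENNReal.ofReal (‖z.2‖ ^ p)) ∂π :=
        lintegral_mono fun z => ofReal_dist_rpow_le hp z.1 z.2
    _ = _ := by
        rw [lintegral_const_mul _ (by fun_prop), lintegral_add_left (by fun_prop),
          ← h.1, ← h.2, lintegral_map hmom measurable_fst, lintegral_map hmom measurable_snd]

lemma sInf_Wcost_ne_top [OpensMeasurableSpace E] (hp : 1 ≤ p) {μ ν : Measure E}
    [IsFiniteMeasure μ] (hμ : FinMom p μ) (hν : FinMom p ν) (h : μ univ = ν univ) :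
    sInf (Wcost p '' {π | IsPlan π μ ν}) ≠ ⊤ := by
  obtain ⟨π, hπ⟩ := exists_isPlan h
  have hmem : Wcost p π ∈ Wcost p '' {π | IsPlan π μ ν} := mem_image_of_mem _ hπ
  refine ne_top_of_le_ne_top ?_ ((sInf_le hmem).trans (Wcost_le_of_isPlan hp hπ))
  exact ENNReal.mul_ne_top (by simp) (ENNReal.add_ne_top.2 ⟨hμ.ne, hν.ne⟩)

lemma sInf_Wcost_add_le (μ₁ ν₁ μ₂ ν₂ : Measure E) :
    sInf (Wcost p '' {π | IsPlan π (μ₁ + μ₂) (ν₁ + ν₂)}) ≤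
      sInf (Wcost p '' {π | IsPlan π μ₁ ν₁}) + sInf (Wcost p '' {π | IsPlan π μ₂ ν₂}) := by
  rw [ENNReal.sInf_add]
  refine le_iInf₂ ?_
  rintro _ ⟨π₁, hπ₁, rfl⟩
  rw [add_comm (Wcost p π₁), ENNReal.sInf_add]
  refine le_iInf₂ ?_
  rintro _ ⟨π₂, hπ₂, rfl⟩
  rw [add_comm (Wcost p π₂), ← Wcost_add]
  exact sInf_le (mem_image_of_mem _ (hπ₁.add hπ₂))

lemma Wp_add_add_le [OpensMeasurableSpace E] (hp : 1 ≤ p) {μ₁ ν₁ μ₂ ν₂ : Measure E}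
    [IsFiniteMeasure μ₁] [IsFiniteMeasure μ₂]
    (hμ₁ : FinMom p μ₁) (hν₁ : FinMom p ν₁) (hμ₂ : FinMom p μ₂) (hν₂ : FinMom p ν₂)
    (h₁ : μ₁ univ = ν₁ univ) (h₂ : μ₂ univ = ν₂ univ) :
    Wp p (μ₁ + μ₂) (ν₁ + ν₂) ≤ Wp p μ₁ ν₁ + Wp p μ₂ ν₂ := by
  have hq₀ : 0 ≤ 1 / p := by positivity
  have hq₁ : 1 / p ≤ 1 := div_le_one_of_le₀ hp (by positivity)
  have ht₁ := ENNReal.rpow_ne_top_of_nonneg hq₀ (sInf_Wcost_ne_top hp hμ₁ hν₁ h₁)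
  have ht₂ := ENNReal.rpow_ne_top_of_nonneg hq₀ (sInf_Wcost_ne_top hp hμ₂ hν₂ h₂)
  unfold Wp
  rw [← ENNReal.toReal_add ht₁ ht₂]
  exact ENNReal.toReal_mono (ENNReal.add_ne_top.2 ⟨ht₁, ht₂⟩)
    ((ENNReal.rpow_le_rpow (sInf_Wcost_add_le μ₁ ν₁ μ₂ ν₂) hq₀).trans
      (ENNReal.rpow_add_le_add_rpow _ _ hq₀ hq₁))

end Wasserstein

section GeneralizedWasserstein

variable {E : Type*} [NormedAddCommGroup E] [MeasurableSpace E] {a b p : ℝ}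

lemma finMom_zero : FinMom p (0 : Measure E) := by
  simp [FinMom]

lemma FinMom.add {μ ν : Measure E} (hμ : FinMom p μ) (hν : FinMom p ν) : FinMom p (μ + ν) := by
  unfold FinMom at *
  rw [lintegral_add_measure]
  exact ENNReal.add_lt_top.2 ⟨hμ, hν⟩

lemma gwSet_nonempty (μ ν : Measure E) : (gwSet a b p μ ν).Nonempty :=
  ⟨_, 0, 0, inferInstance, inferInstance, finMom_zero, finMom_zero, rfl, rfl⟩

lemma bddBelow_gwSet (ha : 0 ≤ a) (hb : 0 ≤ b) (μ ν : Measure E) :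
    BddBelow (gwSet a b p μ ν) := by
  refine ⟨0, ?_⟩
  rintro _ ⟨μ', ν', -, -, -, -, -, rfl⟩
  have : 0 ≤ Wp p μ' ν' := ENNReal.toReal_nonneg
  have : 0 ≤ tvDist μ μ' := ENNReal.toReal_nonneg
  have : 0 ≤ tvDist ν ν' := ENNReal.toReal_nonneg
  positivity

lemma exists_mem_gwSet_add_add_le [OpensMeasurableSpace E] (ha : 0 ≤ a) (hb : 0 ≤ b)
    (hp : 1 ≤ p) {μ₁ μ₂ ν₁ ν₂ : Measure E} [IsFiniteMeasure μ₁] [IsFiniteMeasure μ₂]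
    [IsFiniteMeasure ν₁] [IsFiniteMeasure ν₂] {r₁ r₂ : ℝ}
    (hr₁ : r₁ ∈ gwSet a b p μ₁ ν₁) (hr₂ : r₂ ∈ gwSet a b p μ₂ ν₂) :
    ∃ r ∈ gwSet a b p (μ₁ + μ₂) (ν₁ + ν₂), r ≤ r₁ + r₂ := by
  obtain ⟨μ₁', ν₁', _, _, hμ₁, hν₁, h₁, rfl⟩ := hr₁
  obtain ⟨μ₂', ν₂', _, _, hμ₂, hν₂, h₂, rfl⟩ := hr₂
  refine ⟨_, ⟨μ₁' + μ₂', ν₁' + ν₂', inferInstance, inferInstance, hμ₁.add hμ₂, hν₁.add hν₂,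
    by simp only [Measure.add_apply, h₁, h₂], rfl⟩, ?_⟩
  have hμ := mul_le_mul_of_nonneg_left (tvDist_add_add_le μ₁ μ₂ μ₁' μ₂') ha
  have hν := mul_le_mul_of_nonneg_left (tvDist_add_add_le ν₁ ν₂ ν₁' ν₂') ha
  have hW := mul_le_mul_of_nonneg_left (Wp_add_add_le hp hμ₁ hν₁ hμ₂ hν₂ h₁ h₂) hb
  linarith

end GeneralizedWasserstein

lemma csInf_le_csInf_add_csInf {M : Type*} [ConditionallyCompleteLattice M] [AddGroup M]
    [AddLeftMono M] [AddRightMono M] {s t u : Set M} (hs : BddBelow s)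
    (ht₀ : t.Nonempty) (ht₁ : BddBelow t) (hu₀ : u.Nonempty) (hu₁ : BddBelow u)
    (h : ∀ x ∈ t, ∀ y ∈ u, ∃ z ∈ s, z ≤ x + y) :
    sInf s ≤ sInf t + sInf u := by
  rw [← csInf_add ht₀ ht₁ hu₀ hu₁]
  refine le_csInf (ht₀.add hu₀) ?_
  rintro _ ⟨x, hx, y, hy, rfl⟩
  obtain ⟨z, hz, hzxy⟩ := h x hx y hy
  exact (csInf_le hs hz).trans hzxy

theorem gw_add_le_general {d : ℕ} (a b p : ℝ) (hp : 1 ≤ p) (ha : 0 < a) (hb : 0 < b)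
    (μ₁ μ₂ ν₁ ν₂ : Measure (Euc d)) [IsFiniteMeasure μ₁] [IsFiniteMeasure μ₂]
    [IsFiniteMeasure ν₁] [IsFiniteMeasure ν₂] :
    GW a b p (μ₁ + μ₂) (ν₁ + ν₂) ≤ GW a b p μ₁ ν₁ + GW a b p μ₂ ν₂ :=
  csInf_le_csInf_add_csInf (bddBelow_gwSet ha.le hb.le _ _)
    (gwSet_nonempty _ _) (bddBelow_gwSet ha.le hb.le _ _)
    (gwSet_nonempty _ _) (bddBelow_gwSet ha.le hb.le _ _)
    fun _ hr₁ _ hr₂ => exists_mem_gwSet_add_add_le ha.le hb.le hp hr₁ hr₂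

theorem gw_add_le {d : ℕ} (hd : 1 ≤ d) (a b p : ℝ) (hp : 1 ≤ p) (ha : 0 < a) (hb : 0 < b)
    (μ₁ μ₂ ν₁ ν₂ : Measure (Euc d)) [IsFiniteMeasure μ₁] [IsFiniteMeasure μ₂]
    [IsFiniteMeasure ν₁] [IsFiniteMeasure ν₂] :
    GW a b p (μ₁ + μ₂) (ν₁ + ν₂) ≤ GW a b p μ₁ ν₁ + GW a b p μ₂ ν₂ :=
  gw_add_le_general a b p hp ha hb μ₁ μ₂ ν₁ ν₂
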